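/- For all real numbers x₁ ≠ x₂ and every integer n ≥ 2: if n is even, then (x₁^n − x₂^n)/(x₁ − x₂) = (x₁ + x₂) · ∏_{j=1}^{(n−2)/2} ( (x₁ + x₂)² − 4·x₁·x₂·cos²(πj/n) ), and if n is odd, then (x₁^n − x₂^n)/(x₁ − x₂) = ∏_{j=1}^{(n−1)/2} ( (x₁ + x₂)² − 4·x₁·x₂·cos²(πj/n) ). -/

import Mathlib

/-!
Over `ℂ`, `x ^ n - y ^ n = ∏_{k < n} (x - ζ ^ k * y)` with `ζ = exp (2πi / n)`. The factor `k = 0`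
is `x - y`, and the factors `k` and `n - k` multiply to
`x ^ 2 - 2 x y cos (2πk / n) + y ^ 2 = (x + y) ^ 2 - 4 x y cos² (πk / n)`.
For even `n` the one unpaired factor `k = n / 2` is `x + y`, since `ζ ^ (n / 2) = -1`.
-/

open Finset Complex
open scoped Real

theorem IsPrimitiveRoot.pow_sub_pow_eq_prod_range {R : Type*} [CommRing R] [IsDomain R]
    {ζ : R} {n : ℕ} (hζ : IsPrimitiveRoot ζ n) (hn : 0 < n) (x y : R) :
    x ^ n - y ^ n = ∏ k ∈ range n, (x - ζ ^ k * y) := by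
  classical
  rw [hζ.pow_sub_pow_eq_prod_sub_mul x y hn, Polynomial.nthRootsFinset_def, prod_eq_multiset_prod,
    Multiset.toFinset_val, Multiset.dedup_eq_self.mpr hζ.nthRoots_one_nodup,
    hζ.nthRoots_eq (one_pow n), Multiset.map_map, prod_eq_multiset_prod, range_val]
  simp only [Function.comp_def, mul_one]

theorem Finset.prod_Ico_one_eq_prod_mul_reflect {M : Type*} [CommMonoid M] (f : ℕ → M)
    {m n : ℕ} (h : 2 * m < n) :
    ∏ k ∈ Ico 1 n, f k = (∏ k ∈ Icc 1 m, f k * f (n - k)) * ∏ k ∈ Ico (m + 1) (n - m), f k := by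
  rw [prod_mul_distrib, ← Ico_add_one_right_eq_Icc,
    prod_Ico_reflect f 1 (by omega : m + 1 ≤ n + 1), mul_right_comm,
    prod_Ico_consecutive _ (by omega) (by omega), Nat.add_sub_add_right, Nat.add_sub_cancel,
    prod_Ico_consecutive _ (by omega : 1 ≤ n - m) (by omega : n - m ≤ n)]

theorem ofReal_sub_exp_mul_sub_exp_inv (x y θ : ℝ) :
    ((x : ℂ) - exp (2 * θ * I) * y) * (x - (exp (2 * θ * I))⁻¹ * y) =
      ((x + y) ^ 2 - 4 * x * y * Real.cos θ ^ 2 : ℝ) := by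
  have hprod : exp (2 * θ * I) * (exp (2 * θ * I))⁻¹ = 1 := mul_inv_cancel₀ (exp_ne_zero _)
  have hsum : exp (2 * θ * I) + (exp (2 * θ * I))⁻¹ = 2 * cos (2 * θ) := by
    rw [two_cos, ← exp_neg, neg_mul]
  push_cast
  rw [cos_sq]
  linear_combination (y : ℂ) ^ 2 * hprod - (x : ℂ) * y * hsum

theorem sub_exp_pow_mul_sub_exp_pow_sub (x y : ℝ) {n k : ℕ} (hn : n ≠ 0) (hk : k ≤ n) :
    ((x : ℂ) - exp (2 * π * I / n) ^ k * y) * (x - exp (2 * π * I / n) ^ (n - k) * y) =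
      ((x + y) ^ 2 - 4 * x * y * Real.cos (π * k / n) ^ 2 : ℝ) := by
  rw [pow_sub₀ _ (exp_ne_zero _) hk, (isPrimitiveRoot_exp n hn).pow_eq_one, one_mul,
    ← exp_nat_mul, ← ofReal_sub_exp_mul_sub_exp_inv]
  push_cast
  ring_nf

theorem ofReal_pow_sub_pow_eq_mul_prod_cos_sq (x y : ℝ) {m n : ℕ} (h : 2 * m < n) :
    ((x ^ n - y ^ n : ℝ) : ℂ) =
      (x - y) * (∏ k ∈ Ico (m + 1) (n - m), ((x : ℂ) - exp (2 * π * I / n) ^ k * y)) *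
        ((∏ j ∈ Icc 1 m, ((x + y) ^ 2 - 4 * x * y * Real.cos (π * j / n) ^ 2) : ℝ) : ℂ) := by
  rw [ofReal_sub, ofReal_pow, ofReal_pow, ofReal_prod,
    (isPrimitiveRoot_exp n (by omega)).pow_sub_pow_eq_prod_range (by omega),
    prod_range_eq_mul_Ico _ (by omega), prod_Ico_one_eq_prod_mul_reflect _ h,
    prod_congr rfl fun k hk ↦ sub_exp_pow_mul_sub_exp_pow_sub x y (n := n) (by omega)
      (by simp only [mem_Icc] at hk; omega)]
  rw [pow_zero, one_mul]
  ring

theorem stmt8 (x₁ x₂ : ℝ) (hne : x₁ ≠ x₂) (n : ℕ) (hn : 2 ≤ n) :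
    (Even n →
      (x₁ ^ n - x₂ ^ n) / (x₁ - x₂) =
        (x₁ + x₂) * ∏ j ∈ Finset.Icc 1 ((n - 2) / 2),
          ((x₁ + x₂) ^ 2 - 4 * x₁ * x₂ * Real.cos (Real.pi * j / n) ^ 2)) ∧
    (Odd n →
      (x₁ ^ n - x₂ ^ n) / (x₁ - x₂) =
        ∏ j ∈ Finset.Icc 1 ((n - 1) / 2),
          ((x₁ + x₂) ^ 2 - 4 * x₁ * x₂ * Real.cos (Real.pi * j / n) ^ 2)) := by
  have hsub : x₁ - x₂ ≠ 0 := sub_ne_zero.mpr hne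
  refine ⟨fun ⟨r, hr⟩ ↦ ?_, fun ⟨m, hm⟩ ↦ ?_⟩
  · obtain ⟨m, hm⟩ : ∃ m, n = 2 * (m + 1) := ⟨r - 1, by omega⟩
    have hmid : Ico (m + 1) (n - m) = {m + 1} := by
      ext k; simp only [mem_Ico, mem_singleton]; omega
    have hneg : exp (2 * π * I / n) ^ (m + 1) = -1 := by
      have hprim := (isPrimitiveRoot_exp n (by omega)).pow_of_dvd m.succ_ne_zero
        (Dvd.intro_left 2 hm.symm)
      rw [Nat.div_eq_of_eq_mul_left m.succ_pos hm] at hprim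
      exact hprim.eq_neg_one_of_two_right
    rw [div_eq_iff hsub, show (n - 2) / 2 = m by omega]
    apply ofReal_injective
    rw [ofReal_pow_sub_pow_eq_mul_prod_cos_sq x₁ x₂ (by omega : 2 * m < n), hmid, prod_singleton,
      hneg]
    push_cast
    ring
  · rw [div_eq_iff hsub, show (n - 1) / 2 = m by omega]
    apply ofReal_injective
    rw [ofReal_pow_sub_pow_eq_mul_prod_cos_sq x₁ x₂ (by omega : 2 * m < n),
      show n - m = m + 1 by omega, Ico_self, prod_empty]
    push_cast
    ring
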